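/- For any composition α = (α_1, ..., α_ℓ) of n with partial sums σ_0 = 0, σ_i = α_1 + ⋯ + α_i, the ribbon number r_α equals n! times the determinant of the ℓ×ℓ matrix whose (i,j) entry is 1/(σ_j - σ_{i-1})! (interpreted as 0 when σ_j - σ_{i-1} < 0). -/

import Mathlib

/-- Permutations of `{1, ..., n}`, modeled as functions `ℕ → ℕ` that restrict to a
bijection of `{1, ..., n}` and fix everything else. -/
def PermsA (n : ℕ) : Set (ℕ → ℕ) :=
  {w | Set.BijOn w (Set.Icc 1 n) (Set.Icc 1 n) ∧ ∀ i ∉ Set.Icc 1 n, w i = i}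

/-- The descent set `D(w) = {i ∈ [n-1] : w(i) > w(i+1)}`. -/
def DesA (n : ℕ) (w : ℕ → ℕ) : Set ℕ :=
  {i | 1 ≤ i ∧ i < n ∧ w (i + 1) < w i}

/-- The descent set `D(α) = {α₁, α₁+α₂, …, α₁+⋯+α_{ℓ-1}}` of a composition `α` of `n`. -/
def DsetA {n : ℕ} (α : Composition n) : Set ℕ :=
  {m | ∃ i, 0 < i ∧ i < α.length ∧ α.sizeUpTo i = m}

/-- The type A ribbon number `r_α = |{w ∈ S_n : D(w) = D(α)}|`. -/
noncomputable def ribbonA {n : ℕ} (α : Composition n) : ℕ :=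
  Set.ncard {w ∈ PermsA n | DesA n w = DsetA α}
/-- `k`-th smallest element (0-indexed) of a finset of naturals. -/
noncomputable def nthF (F : Finset ℕ) (k : ℕ) : ℕ :=
  if h : k < F.card then F.orderEmbOfFin rfl ⟨k, h⟩ else 0

lemma nthF_mem {F : Finset ℕ} {k : ℕ} (h : k < F.card) : nthF F k ∈ F := by
  rw [nthF, dif_pos h]; exact F.orderEmbOfFin_mem rfl ⟨k, h⟩

lemma nthF_lt_nthF_iff {F : Finset ℕ} {k k' : ℕ} (h : k < F.card) (h' : k' < F.card) :
    nthF F k < nthF F k' ↔ k < k' := by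
  rw [nthF, nthF, dif_pos h, dif_pos h']
  exact (F.orderEmbOfFin rfl).lt_iff_lt.trans (by simp [Fin.lt_def])

lemma nthF_inj {F : Finset ℕ} {k k' : ℕ} (h : k < F.card) (h' : k' < F.card)
    (he : nthF F k = nthF F k') : k = k' := by
  by_contra hne
  rcases Nat.lt_or_ge k k' with hlt | hge
  · exact absurd he (ne_of_lt ((nthF_lt_nthF_iff h h').2 hlt))
  · have hlt : k' < k := lt_of_le_of_ne hge fun hh => hne hh.symm
    exact absurd he.symm (ne_of_lt ((nthF_lt_nthF_iff h' h).2 hlt))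

lemma nthF_surj {F : Finset ℕ} {x : ℕ} (hx : x ∈ F) : ∃ k, k < F.card ∧ nthF F k = x := by
  have : x ∈ Set.range (F.orderEmbOfFin rfl) := by
    rw [Finset.range_orderEmbOfFin]; exact_mod_cast hx
  obtain ⟨⟨k, hk⟩, hkx⟩ := this
  exact ⟨k, hk, by rw [nthF, dif_pos hk]; exact hkx⟩

/-- Uniqueness of the increasing enumeration. -/
lemma nthF_eq_of_strictMono {F : Finset ℕ} {c : ℕ} (hc : F.card = c) (g : Fin c → ℕ)
    (hmono : StrictMono g) (hmem : ∀ x, g x ∈ F) (j : Fin c) : g j = nthF F (j : ℕ) := by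
  have h1 : g = F.orderEmbOfFin hc := Finset.orderEmbOfFin_unique hc hmem hmono
  rw [nthF, dif_pos (show (j:ℕ) < F.card by rw [hc]; exact j.2), h1]
  exact (Finset.orderEmbOfFin_eq_orderEmbOfFin_iff).2 rfl

/-- Chain lemma: adjacent increases give the global inequality `w i + d ≤ w (i + d)`. -/
lemma chain_add {n a : ℕ} {w : ℕ → ℕ} (hd : ∀ i, a ≤ i → i < n → w i < w (i + 1)) :
    ∀ d i, a ≤ i → i + d ≤ n → w i + d ≤ w (i + d) := by
  intro d
  induction d with
  | zero => intro i _ _; simp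
  | succ d ih =>
    intro i hi hin
    have h1 : w i + d ≤ w (i + d) := ih i hi (by omega)
    have h2 : w (i + d) < w (i + d + 1) := hd (i + d) (by omega) (by omega)
    have h3 : i + (d + 1) = i + d + 1 := by omega
    rw [h3]; omega

/-- A permutation of `{1,…,n}` with no descents is the identity. -/
lemma eq_id_of_noDescent {n : ℕ} {w : ℕ → ℕ} (hw : w ∈ PermsA n)
    (hd : ∀ i, 1 ≤ i → i < n → w i < w (i + 1)) : w = id := by
  obtain ⟨hbij, hfix⟩ := hw
  funext i
  by_cases hi : i ∈ Set.Icc 1 n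
  · obtain ⟨hi1, hin⟩ := hi
    have hch := chain_add hd
    have hw1 : 1 ≤ w 1 := (hbij.mapsTo ⟨le_refl 1, hi1.trans hin⟩).1
    have hlow : i ≤ w i := by
      have := hch (i - 1) 1 (le_refl 1) (by omega)
      have h1 : 1 + (i - 1) = i := by omega
      rw [h1] at this; omega
    have hwn : w n ≤ n := (hbij.mapsTo ⟨by omega, le_refl n⟩).2
    have hhigh : w i ≤ i := by
      have := hch (n - i) i hi1 (by omega)
      have h1 : i + (n - i) = n := by omega
      rw [h1] at this; omega
    simp; omega
  · exact hfix i hi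

lemma permsA_finite (n : ℕ) : (PermsA n).Finite := by
  rw [← Set.finite_coe_iff]
  haveI : Finite ↥(Set.Icc 1 n) := (Set.finite_Icc 1 n).to_subtype
  refine Finite.of_injective
    (fun w => fun i : ↥(Set.Icc 1 n) => (⟨w.1 i.1, w.2.1.mapsTo i.2⟩ : ↥(Set.Icc 1 n))) ?_
  rintro ⟨w, hw⟩ ⟨v, hv⟩ h
  ext i
  by_cases hi : i ∈ Set.Icc 1 n
  · exact congrArg Subtype.val (congrFun h ⟨i, hi⟩)
  · show w i = v i
    rw [hw.2 i hi, hv.2 i hi]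

/-- The gluing map: a subset `S` of `{1,…,m+b}` of size `b` and a permutation `w'` of
`{1,…,m}` produce a permutation of `{1,…,m+b}` whose first `m` values enumerate the
complement of `S` in the pattern of `w'`, and whose last `b` values enumerate `S`
increasingly. -/
noncomputable def PhiAB (m b : ℕ) (S : Finset ℕ) (w' : ℕ → ℕ) : ℕ → ℕ := fun i =>
  if 1 ≤ i ∧ i ≤ m then nthF (Finset.Icc 1 (m + b) \ S) (w' i - 1)
  else if m + 1 ≤ i ∧ i ≤ m + b then nthF S (i - m - 1) else i

section Count

variable {m b : ℕ} {S : Finset ℕ} {w' : ℕ → ℕ}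

lemma Phi_head {i : ℕ} (h : 1 ≤ i ∧ i ≤ m) :
    PhiAB m b S w' i = nthF (Finset.Icc 1 (m + b) \ S) (w' i - 1) := if_pos h

lemma Phi_tail {i : ℕ} (h : m + 1 ≤ i ∧ i ≤ m + b) :
    PhiAB m b S w' i = nthF S (i - m - 1) := by
  rw [PhiAB, if_neg (by omega), if_pos h]

lemma Phi_out {i : ℕ} (h : ¬(1 ≤ i ∧ i ≤ m + b)) : PhiAB m b S w' i = i := by
  rw [PhiAB, if_neg (by omega), if_neg (by omega)]

lemma Tc_card (hS : S ⊆ Finset.Icc 1 (m + b)) (hcard : S.card = b) :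
    (Finset.Icc 1 (m + b) \ S).card = m := by
  rw [Finset.card_sdiff_of_subset hS, Nat.card_Icc, hcard]; omega

lemma Phi_mem (hS : S ⊆ Finset.Icc 1 (m + b)) (hcard : S.card = b) (hw' : w' ∈ PermsA m) :
    PhiAB m b S w' ∈ PermsA (m + b) ∧
      DesA (m + b) (PhiAB m b S w') \ {m} = DesA m w' := by
  obtain ⟨hbij', hfix'⟩ := hw'
  set Tc := Finset.Icc 1 (m + b) \ S with hTcdef
  have hTc : Tc.card = m := Tc_card hS hcard
  have hidx : ∀ i, 1 ≤ i → i ≤ m → 1 ≤ w' i ∧ w' i ≤ m := fun i h1 h2 =>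
    hbij'.mapsTo (Set.mem_Icc.mpr ⟨h1, h2⟩)
  have hheadmem : ∀ i, 1 ≤ i → i ≤ m → PhiAB m b S w' i ∈ Tc := by
    intro i h1 h2
    rw [Phi_head ⟨h1, h2⟩]
    exact nthF_mem (by have := hidx i h1 h2; omega)
  have htailmem : ∀ i, m + 1 ≤ i → i ≤ m + b → PhiAB m b S w' i ∈ S := by
    intro i h1 h2
    rw [Phi_tail ⟨h1, h2⟩]
    exact nthF_mem (by omega)
  have hTcsplit : ∀ x, x ∈ Tc → (1 ≤ x ∧ x ≤ m + b) ∧ x ∉ S := by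
    intro x hx
    rw [hTcdef, Finset.mem_sdiff, Finset.mem_Icc] at hx
    exact hx
  have hSmem : ∀ x, x ∈ S → 1 ≤ x ∧ x ≤ m + b := fun x hx => Finset.mem_Icc.mp (hS hx)
  have hmaps : Set.MapsTo (PhiAB m b S w') (Set.Icc 1 (m + b)) (Set.Icc 1 (m + b)) := by
    intro i hi
    rw [Set.mem_Icc] at hi
    rcases le_or_gt i m with him | him
    · exact Set.mem_Icc.mpr (hTcsplit _ (hheadmem i hi.1 him)).1
    · exact Set.mem_Icc.mpr (hSmem _ (htailmem i (by omega) hi.2))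
  have hinj : Set.InjOn (PhiAB m b S w') (Set.Icc 1 (m + b)) := by
    intro i hi j hj heq
    rw [Set.mem_Icc] at hi hj
    rcases le_or_gt i m with him | him <;> rcases le_or_gt j m with hjm | hjm
    · rw [Phi_head ⟨hi.1, him⟩, Phi_head ⟨hj.1, hjm⟩] at heq
      have hbi := hidx i hi.1 him
      have hbj := hidx j hj.1 hjm
      have := nthF_inj (F := Tc) (by omega) (by omega) heq
      have : w' i = w' j := by omega
      exact hbij'.injOn (Set.mem_Icc.mpr ⟨hi.1, him⟩) (Set.mem_Icc.mpr ⟨hj.1, hjm⟩) this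
    · exact absurd heq (by
        have h1 := hheadmem i hi.1 him
        have h2 := htailmem j (by omega) hj.2
        intro hc
        exact (hTcsplit _ h1).2 (hc ▸ h2))
    · exact absurd heq (by
        have h1 := htailmem i (by omega) hi.2
        have h2 := hheadmem j hj.1 hjm
        intro hc
        exact (hTcsplit _ h2).2 (hc ▸ h1))
    · rw [Phi_tail ⟨by omega, hi.2⟩, Phi_tail ⟨by omega, hj.2⟩] at heq
      have := nthF_inj (F := S) (by omega) (by omega) heq
      omega
  have hsurj : Set.SurjOn (PhiAB m b S w') (Set.Icc 1 (m + b)) (Set.Icc 1 (m + b)) := by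
    intro y hy
    rw [Set.mem_Icc] at hy
    by_cases hyS : y ∈ S
    · obtain ⟨k, hk, hky⟩ := nthF_surj hyS
      rw [hcard] at hk
      refine ⟨m + 1 + k, Set.mem_Icc.mpr ⟨by omega, by omega⟩, ?_⟩
      rw [Phi_tail ⟨by omega, by omega⟩]
      have : m + 1 + k - m - 1 = k := by omega
      rw [this, hky]
    · have hyTc : y ∈ Tc := by
        rw [hTcdef, Finset.mem_sdiff, Finset.mem_Icc]
        exact ⟨hy, hyS⟩
      obtain ⟨k, hk, hky⟩ := nthF_surj hyTc
      rw [hTc] at hk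
      obtain ⟨i, hi, hwi⟩ := hbij'.surjOn (Set.mem_Icc.mpr (⟨by omega, by omega⟩ : 1 ≤ k + 1 ∧ k + 1 ≤ m))
      rw [Set.mem_Icc] at hi
      refine ⟨i, Set.mem_Icc.mpr ⟨hi.1, by omega⟩, ?_⟩
      rw [Phi_head ⟨hi.1, hi.2⟩, hwi]
      simpa using hky
  have hfix : ∀ i ∉ Set.Icc 1 (m + b), PhiAB m b S w' i = i := by
    intro i hi
    rw [Set.mem_Icc] at hi
    exact Phi_out (by omega)
  refine ⟨⟨⟨hmaps, hinj, hsurj⟩, hfix⟩, ?_⟩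
  ext i
  simp only [DesA, Set.mem_diff, Set.mem_setOf_eq, Set.mem_singleton_iff]
  constructor
  · rintro ⟨⟨h1, h2, hlt⟩, hne⟩
    rcases Nat.lt_or_ge i m with him | him
    · rw [Phi_head ⟨by omega, by omega⟩, Phi_head ⟨h1, by omega⟩] at hlt
      have hbi := hidx i h1 (by omega)
      have hbj := hidx (i + 1) (by omega) (by omega)
      rw [nthF_lt_nthF_iff (by rw [Tc_card hS hcard]; omega)
        (by rw [Tc_card hS hcard]; omega)] at hlt
      exact ⟨h1, him, by omega⟩
    · exfalso
      have him' : m + 1 ≤ i := by omega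
      rw [Phi_tail ⟨by omega, by omega⟩, Phi_tail ⟨him', by omega⟩] at hlt
      rw [nthF_lt_nthF_iff (by omega) (by omega)] at hlt
      omega
  · rintro ⟨h1, h2, hlt⟩
    refine ⟨⟨h1, by omega, ?_⟩, by omega⟩
    rw [Phi_head ⟨by omega, by omega⟩, Phi_head ⟨h1, by omega⟩]
    have hbi := hidx i h1 (by omega)
    have hbj := hidx (i + 1) (by omega) (by omega)
    rw [nthF_lt_nthF_iff (by rw [Tc_card hS hcard]; omega)
      (by rw [Tc_card hS hcard]; omega)]
    omega

end Count

section Count2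

variable {m b : ℕ}

lemma Phi_tail_char {S : Finset ℕ} {w' : ℕ → ℕ} (hS : S ⊆ Finset.Icc 1 (m + b))
    (hcard : S.card = b) (x : ℕ) :
    x ∈ S ↔ ∃ i, (m + 1 ≤ i ∧ i ≤ m + b) ∧ PhiAB m b S w' i = x := by
  constructor
  · intro hx
    obtain ⟨k, hk, hky⟩ := nthF_surj hx
    rw [hcard] at hk
    refine ⟨m + 1 + k, ⟨by omega, by omega⟩, ?_⟩
    rw [Phi_tail ⟨by omega, by omega⟩]
    have : m + 1 + k - m - 1 = k := by omega
    rw [this, hky]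
  · rintro ⟨i, hi, rfl⟩
    rw [Phi_tail hi]
    exact nthF_mem (by omega)

lemma Phi_injOn {S₁ S₂ : Finset ℕ} {w₁ w₂ : ℕ → ℕ}
    (hS₁ : S₁ ⊆ Finset.Icc 1 (m + b)) (hc₁ : S₁.card = b)
    (hS₂ : S₂ ⊆ Finset.Icc 1 (m + b)) (hc₂ : S₂.card = b)
    (hw₁ : w₁ ∈ PermsA m) (hw₂ : w₂ ∈ PermsA m)
    (heq : PhiAB m b S₁ w₁ = PhiAB m b S₂ w₂) : S₁ = S₂ ∧ w₁ = w₂ := by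
  have hSeq : S₁ = S₂ := by
    ext x
    rw [Phi_tail_char (w' := w₁) hS₁ hc₁ x, Phi_tail_char (w' := w₂) hS₂ hc₂ x, heq]
  subst hSeq
  refine ⟨rfl, funext fun i => ?_⟩
  by_cases hi : 1 ≤ i ∧ i ≤ m
  · have h1 := congrFun heq i
    rw [Phi_head hi, Phi_head hi] at h1
    have hb₁ := hw₁.1.mapsTo (Set.mem_Icc.mpr hi)
    have hb₂ := hw₂.1.mapsTo (Set.mem_Icc.mpr hi)
    rw [Set.mem_Icc] at hb₁ hb₂
    have := nthF_inj (by rw [Tc_card hS₁ hc₁]; omega) (by rw [Tc_card hS₁ hc₁]; omega) h1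
    omega
  · rw [hw₁.2 i (by rw [Set.mem_Icc]; omega), hw₂.2 i (by rw [Set.mem_Icc]; omega)]

lemma Phi_surj (hb : 0 < b) {D : Set ℕ} (hD : ∀ x ∈ D, 1 ≤ x ∧ x < m)
    {w : ℕ → ℕ} (hw : w ∈ PermsA (m + b)) (hdes : DesA (m + b) w \ {m} = D) :
    ∃ S : Finset ℕ, ∃ w' : ℕ → ℕ, (S ⊆ Finset.Icc 1 (m + b) ∧ S.card = b) ∧
      (w' ∈ PermsA m ∧ DesA m w' = D) ∧ PhiAB m b S w' = w := by
  classical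
  obtain ⟨hbij, hfix⟩ := hw
  set n := m + b with hn
  set S := Finset.image w (Finset.Icc (m + 1) n) with hSdef
  have hinjIcc : Set.InjOn w (Set.Icc 1 n) := hbij.injOn
  have hScard : S.card = b := by
    rw [hSdef, Finset.card_image_of_injOn, Nat.card_Icc]
    · omega
    · intro x hx y hy hxy
      rw [Finset.coe_Icc, Set.mem_Icc] at hx hy
      exact hinjIcc (Set.mem_Icc.mpr ⟨by omega, hx.2⟩) (Set.mem_Icc.mpr ⟨by omega, hy.2⟩) hxy
  have hSsub : S ⊆ Finset.Icc 1 n := by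
    intro x hx
    rw [hSdef, Finset.mem_image] at hx
    obtain ⟨i, hi, rfl⟩ := hx
    rw [Finset.mem_Icc] at hi
    have := hbij.mapsTo (Set.mem_Icc.mpr (⟨by omega, hi.2⟩ : 1 ≤ i ∧ i ≤ n))
    rw [Set.mem_Icc] at this
    exact Finset.mem_Icc.mpr this
  -- no descents in the tail
  have htail_lt : ∀ i, m + 1 ≤ i → i < n → w i < w (i + 1) := by
    intro i h1 h2
    by_contra hc
    have hdesc : i ∈ DesA n w \ {m} := by
      refine ⟨⟨by omega, h2, ?_⟩, by simp; omega⟩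
      have hne : w (i + 1) ≠ w i := fun hc' =>
        (by omega : i + 1 ≠ i) (hinjIcc (Set.mem_Icc.mpr ⟨by omega, by omega⟩)
          (Set.mem_Icc.mpr ⟨by omega, by omega⟩) hc')
      omega
    rw [hdes] at hdesc
    have := hD i hdesc
    omega
  have htail_eq : ∀ i, m + 1 ≤ i → i ≤ n → w i = nthF S (i - m - 1) := by
    have hmono : StrictMono (fun j : Fin b => w (m + 1 + (j : ℕ))) := by
      intro j j' hjj
      show w (m + 1 + (j : ℕ)) < w (m + 1 + (j' : ℕ))
      have hch := chain_add (a := m + 1) (n := n) htail_lt ((j' : ℕ) - (j : ℕ)) (m + 1 + j)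
        (by omega) (by have := j'.2; omega)
      have he : m + 1 + (j : ℕ) + ((j' : ℕ) - (j : ℕ)) = m + 1 + (j' : ℕ) := by
        have : (j : ℕ) < (j' : ℕ) := hjj
        omega
      rw [he] at hch
      have : (j : ℕ) < (j' : ℕ) := hjj
      omega
    have hmem : ∀ j : Fin b, w (m + 1 + (j : ℕ)) ∈ S := by
      intro j
      rw [hSdef]
      exact Finset.mem_image_of_mem w (Finset.mem_Icc.mpr ⟨by omega, by have := j.2; omega⟩)
    intro i h1 h2
    have := nthF_eq_of_strictMono hScard _ hmono hmem ⟨i - m - 1, by omega⟩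
    simp only at this
    have he : m + 1 + (i - m - 1) = i := by omega
    rw [he] at this
    exact this
  set Tc := Finset.Icc 1 n \ S with hTcdef
  have hTcc : Tc.card = m := Tc_card hSsub hScard
  have hheadTc : ∀ i, 1 ≤ i → i ≤ m → w i ∈ Tc := by
    intro i h1 h2
    rw [hTcdef, Finset.mem_sdiff]
    constructor
    · have := hbij.mapsTo (Set.mem_Icc.mpr (⟨h1, by omega⟩ : 1 ≤ i ∧ i ≤ n))
      rw [Set.mem_Icc] at this
      exact Finset.mem_Icc.mpr this
    · intro hc
      rw [hSdef, Finset.mem_image] at hc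
      obtain ⟨i', hi', hwi'⟩ := hc
      rw [Finset.mem_Icc] at hi'
      have : i' = i := hinjIcc (Set.mem_Icc.mpr ⟨by omega, hi'.2⟩)
        (Set.mem_Icc.mpr ⟨h1, by omega⟩) hwi'
      omega
  set w1 : ℕ → ℕ := fun i =>
    if h : 1 ≤ i ∧ i ≤ m then ((Tc.orderIsoOfFin hTcc).symm ⟨w i, hheadTc i h.1 h.2⟩ : Fin m) + 1
    else i with hw1def
  have hkey : ∀ i, 1 ≤ i → i ≤ m →
      nthF Tc (w1 i - 1) = w i ∧ 1 ≤ w1 i ∧ w1 i ≤ m := by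
    intro i h1 h2
    set k : Fin m := (Tc.orderIsoOfFin hTcc).symm ⟨w i, hheadTc i h1 h2⟩ with hk
    have hw1i : w1 i = (k : ℕ) + 1 := by rw [hw1def]; simp only [dif_pos (And.intro h1 h2)]; rfl
    have happ : Tc.orderEmbOfFin hTcc k = w i := by
      have := (Tc.orderIsoOfFin hTcc).apply_symm_apply ⟨w i, hheadTc i h1 h2⟩
      rw [← hk] at this
      exact congrArg Subtype.val this
    have hnth : nthF Tc (k : ℕ) = w i := by
      rw [nthF, dif_pos (show (k : ℕ) < Tc.card by rw [hTcc]; exact k.2)]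
      rw [← happ]
      exact Finset.orderEmbOfFin_eq_orderEmbOfFin_iff.2 rfl
    refine ⟨?_, by omega, by rw [hw1i]; have := k.2; omega⟩
    rw [hw1i]
    simpa using hnth
  have hw1fix : ∀ i ∉ Set.Icc 1 m, w1 i = i := by
    intro i hi
    rw [Set.mem_Icc] at hi
    rw [hw1def]
    exact dif_neg (by omega)
  have hw1perm : w1 ∈ PermsA m := by
    refine ⟨⟨?_, ?_, ?_⟩, hw1fix⟩
    · intro i hi
      rw [Set.mem_Icc] at hi
      exact Set.mem_Icc.mpr (hkey i hi.1 hi.2).2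
    · intro i hi j hj heq
      rw [Set.mem_Icc] at hi hj
      obtain ⟨hnthi, hbi⟩ := hkey i hi.1 hi.2
      obtain ⟨hnthj, hbj⟩ := hkey j hj.1 hj.2
      have hwij : w i = w j := by
        rw [← hnthi, ← hnthj, heq]
      exact hinjIcc (Set.mem_Icc.mpr ⟨hi.1, by omega⟩) (Set.mem_Icc.mpr ⟨hj.1, by omega⟩) hwij
    · intro y hy
      rw [Set.mem_Icc] at hy
      have hx : nthF Tc (y - 1) ∈ Tc := nthF_mem (by omega)
      have hxn : nthF Tc (y - 1) ∈ Set.Icc 1 n := by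
        rw [hTcdef, Finset.mem_sdiff, Finset.mem_Icc] at hx
        exact Set.mem_Icc.mpr hx.1
      obtain ⟨i, hi, hwi⟩ := hbij.surjOn hxn
      rw [Set.mem_Icc] at hi
      have him : i ≤ m := by
        by_contra hc
        have : w i ∈ S := by
          rw [hSdef]
          exact Finset.mem_image_of_mem w (Finset.mem_Icc.mpr ⟨by omega, hi.2⟩)
        rw [hwi] at this
        rw [hTcdef, Finset.mem_sdiff] at hx
        exact hx.2 this
      refine ⟨i, Set.mem_Icc.mpr ⟨hi.1, him⟩, ?_⟩
      obtain ⟨hnthi, hbi⟩ := hkey i hi.1 him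
      rw [hwi] at hnthi
      have := nthF_inj (F := Tc) (by rw [hTcc]; omega) (by rw [hTcc]; omega) hnthi
      omega
  have hw1des : DesA m w1 = D := by
    ext i
    simp only [DesA, Set.mem_setOf_eq]
    constructor
    · rintro ⟨h1, h2, hlt⟩
      obtain ⟨hnthi, hbi⟩ := hkey i h1 (by omega)
      obtain ⟨hnthj, hbj⟩ := hkey (i + 1) (by omega) (by omega)
      have hwlt : w (i + 1) < w i := by
        rw [← hnthi, ← hnthj]
        rw [nthF_lt_nthF_iff (by rw [hTcc]; omega) (by rw [hTcc]; omega)]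
        omega
      have : i ∈ DesA n w \ {m} := ⟨⟨h1, by omega, hwlt⟩, by simp; omega⟩
      rw [hdes] at this
      exact this
    · intro hiD
      have hi := hD i hiD
      rw [← hdes] at hiD
      obtain ⟨⟨h1, h2, hlt⟩, -⟩ := hiD
      refine ⟨h1, hi.2, ?_⟩
      obtain ⟨hnthi, hbi⟩ := hkey i h1 (by omega)
      obtain ⟨hnthj, hbj⟩ := hkey (i + 1) (by omega) (by omega)
      rw [← hnthi, ← hnthj] at hlt
      rw [nthF_lt_nthF_iff (by rw [hTcc]; omega) (by rw [hTcc]; omega)] at hlt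
      omega
  refine ⟨S, w1, ⟨hSsub, hScard⟩, ⟨hw1perm, hw1des⟩, funext fun i => ?_⟩
  by_cases hi : 1 ≤ i ∧ i ≤ m
  · rw [Phi_head hi]
    exact (hkey i hi.1 hi.2).1
  · by_cases hi' : m + 1 ≤ i ∧ i ≤ n
    · rw [Phi_tail hi']
      exact (htail_eq i hi'.1 hi'.2).symm
    · rw [Phi_out (by omega)]
      exact (hfix i (by rw [Set.mem_Icc]; omega)).symm

end Count2

lemma countA (m b : ℕ) (hb : 0 < b) (D : Set ℕ) (hD : ∀ x ∈ D, 1 ≤ x ∧ x < m) :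
    {w ∈ PermsA (m + b) | DesA (m + b) w \ {m} = D}.ncard
      = (m + b).choose b * {w ∈ PermsA m | DesA m w = D}.ncard := by
  classical
  set A' := {w ∈ PermsA m | DesA m w = D} with hA'
  set C := {w ∈ PermsA (m + b) | DesA (m + b) w \ {m} = D} with hC
  set P : Set (Finset ℕ) := ↑((Finset.Icc 1 (m + b)).powersetCard b) with hP
  have hmemP : ∀ S : Finset ℕ, S ∈ P ↔ S ⊆ Finset.Icc 1 (m + b) ∧ S.card = b := by
    intro S
    rw [hP, Finset.mem_coe, Finset.mem_powersetCard]
  have hbijOn : Set.BijOn (fun p : Finset ℕ × (ℕ → ℕ) => PhiAB m b p.1 p.2) (P ×ˢ A') C := by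
    refine ⟨?_, ?_, ?_⟩
    · rintro ⟨S, w'⟩ ⟨hSP, hw'⟩
      obtain ⟨hSsub, hScard⟩ := (hmemP S).1 hSP
      obtain ⟨hperm, hdes⟩ := hw'
      obtain ⟨h1, h2⟩ := Phi_mem hSsub hScard hperm
      exact ⟨h1, by rw [h2, hdes]⟩
    · rintro ⟨S₁, w₁⟩ ⟨hS₁, hw₁⟩ ⟨S₂, w₂⟩ ⟨hS₂, hw₂⟩ heq
      obtain ⟨hs₁, hc₁⟩ := (hmemP S₁).1 hS₁
      obtain ⟨hs₂, hc₂⟩ := (hmemP S₂).1 hS₂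
      obtain ⟨e1, e2⟩ := Phi_injOn hs₁ hc₁ hs₂ hc₂ hw₁.1 hw₂.1 heq
      exact Prod.ext e1 e2
    · intro w hw
      obtain ⟨hwperm, hwdes⟩ := hw
      obtain ⟨S, w', ⟨hs, hc⟩, ⟨hp, hd⟩, heq⟩ := Phi_surj hb hD hwperm hwdes
      exact ⟨(S, w'), ⟨(hmemP S).2 ⟨hs, hc⟩, hp, hd⟩, heq⟩
  have h1 : C.ncard = (P ×ˢ A').ncard := by
    rw [← hbijOn.image_eq, Set.ncard_image_of_injOn hbijOn.injOn]
  have h2 : (P ×ˢ A').ncard = P.ncard * A'.ncard := by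
    rw [← Nat.card_coe_set_eq, ← Nat.card_coe_set_eq, ← Nat.card_coe_set_eq,
      Nat.card_congr (Equiv.Set.prod P A'), Nat.card_prod]
  have h3 : P.ncard = (m + b).choose b := by
    rw [hP, Set.ncard_coe_finset, Finset.card_powersetCard, Nat.card_Icc]
    norm_num
  rw [h1, h2, h3]

/-- The ribbon determinant matrix built from a partial-sum function `σ`. -/
def MD (ℓ : ℕ) (σ : ℕ → ℕ) : Matrix (Fin ℓ) (Fin ℓ) ℚ := fun i j =>
  if σ (i : ℕ) ≤ σ ((j : ℕ) + 1) then (1 : ℚ) / ((σ ((j : ℕ) + 1) - σ (i : ℕ)).factorial) else 0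

lemma MD_det_rec (ℓ : ℕ) (hℓ : 1 ≤ ℓ) (σ : ℕ → ℕ)
    (hmono : ∀ i j, i < j → j ≤ ℓ + 1 → σ i < σ j) :
    (MD (ℓ + 1) σ).det =
      (1 : ℚ) / ((σ (ℓ + 1) - σ ℓ).factorial) * (MD ℓ σ).det
        - (MD ℓ (fun j => if j < ℓ then σ j else σ (ℓ + 1))).det := by
  rw [Matrix.det_succ_row _ (Fin.last ℓ)]
  set jp : Fin (ℓ + 1) := ⟨ℓ - 1, by omega⟩ with hjp
  set jl : Fin (ℓ + 1) := Fin.last ℓ with hjl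
  have hsum : ∑ j : Fin (ℓ + 1),
      (-1 : ℚ) ^ ((Fin.last ℓ : ℕ) + (j : ℕ)) * MD (ℓ + 1) σ (Fin.last ℓ) j *
        ((MD (ℓ + 1) σ).submatrix (Fin.last ℓ).succAbove j.succAbove).det
      = ∑ j ∈ ({jp, jl} : Finset (Fin (ℓ + 1))),
        (-1 : ℚ) ^ ((Fin.last ℓ : ℕ) + (j : ℕ)) * MD (ℓ + 1) σ (Fin.last ℓ) j *
          ((MD (ℓ + 1) σ).submatrix (Fin.last ℓ).succAbove j.succAbove).det := by
    refine (Finset.sum_subset (Finset.subset_univ _) ?_).symm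
    intro x _ hx
    simp only [Finset.mem_insert, Finset.mem_singleton] at hx
    push_neg at hx
    have hx1 : (x : ℕ) ≠ ℓ - 1 := fun hc => hx.1 (Fin.ext hc)
    have hx2 : (x : ℕ) ≠ ℓ := fun hc => hx.2 (Fin.ext (by rw [hc]; rfl))
    have hxb : (x : ℕ) < ℓ - 1 := by have := x.2; omega
    have hzero : MD (ℓ + 1) σ (Fin.last ℓ) x = 0 := by
      rw [MD, if_neg]
      push_neg
      rw [Fin.val_last]
      exact hmono ((x : ℕ) + 1) ℓ (by omega) (by omega)
    rw [hzero, mul_zero, zero_mul]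
  rw [hsum, Finset.sum_pair (show jp ≠ jl by
    intro hc
    have := congrArg Fin.val hc
    simp only [hjp, hjl, Fin.val_last] at this
    omega)]
  have hejl : MD (ℓ + 1) σ (Fin.last ℓ) jl
      = (1 : ℚ) / ((σ (ℓ + 1) - σ ℓ).factorial) := by
    rw [MD, hjl, if_pos]
    · simp [Fin.val_last]
    · simp only [Fin.val_last]
      exact le_of_lt (hmono ℓ (ℓ + 1) (by omega) (by omega))
  have hejp : MD (ℓ + 1) σ (Fin.last ℓ) jp = 1 := by
    rw [MD]
    have hv : (jp : ℕ) = ℓ - 1 := rfl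
    rw [hv, Fin.val_last]
    have he : ℓ - 1 + 1 = ℓ := by omega
    rw [he, if_pos le_rfl, Nat.sub_self]
    simp
  have hsubjl : (MD (ℓ + 1) σ).submatrix (Fin.last ℓ).succAbove jl.succAbove = MD ℓ σ := by
    ext i j
    rw [hjl, Matrix.submatrix_apply, Fin.succAbove_last]
    simp [MD, Fin.coe_castSucc]
  have hsubjp : (MD (ℓ + 1) σ).submatrix (Fin.last ℓ).succAbove jp.succAbove
      = MD ℓ (fun j => if j < ℓ then σ j else σ (ℓ + 1)) := by
    ext i j
    rw [Matrix.submatrix_apply, Fin.succAbove_last]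
    have hi : ((Fin.castSucc i : Fin (ℓ + 1)) : ℕ) = (i : ℕ) := rfl
    rcases lt_or_ge ((j : ℕ) : ℕ) (ℓ - 1) with hj | hj
    · have hcol : jp.succAbove j = Fin.castSucc j := by
        apply Fin.succAbove_of_castSucc_lt
        rw [Fin.lt_def]
        exact hj
      rw [hcol, MD, MD]
      have h1 : ((Fin.castSucc j : Fin (ℓ + 1)) : ℕ) = (j : ℕ) := rfl
      rw [hi, h1]
      have h2 : (if (i : ℕ) < ℓ then σ (i : ℕ) else σ (ℓ + 1)) = σ (i : ℕ) :=
        if_pos i.2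
      have h3 : (if (j : ℕ) + 1 < ℓ then σ ((j : ℕ) + 1) else σ (ℓ + 1)) = σ ((j : ℕ) + 1) :=
        if_pos (by omega)
      rw [h2, h3]
    · have hjeq : (j : ℕ) = ℓ - 1 := by have := j.2; omega
      have hcol : jp.succAbove j = j.succ := by
        apply Fin.succAbove_of_le_castSucc
        rw [Fin.le_def]
        show ℓ - 1 ≤ (j : ℕ)
        omega
      rw [hcol, MD, MD]
      have h1 : ((j.succ : Fin (ℓ + 1)) : ℕ) = (j : ℕ) + 1 := rfl
      rw [hi, h1]
      have h2 : (if (i : ℕ) < ℓ then σ (i : ℕ) else σ (ℓ + 1)) = σ (i : ℕ) :=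
        if_pos i.2
      have h3 : (if (j : ℕ) + 1 < ℓ then σ ((j : ℕ) + 1) else σ (ℓ + 1)) = σ (ℓ + 1) :=
        if_neg (by omega)
      have h4 : (j : ℕ) + 1 + 1 = ℓ + 1 := by omega
      rw [h2, h3, h4]
  rw [hejl, hejp, hsubjl, hsubjp]
  have hs1 : (-1 : ℚ) ^ ((Fin.last ℓ : ℕ) + (jl : ℕ)) = 1 := by
    rw [hjl, Fin.val_last]
    exact Even.neg_one_pow ⟨ℓ, by omega⟩
  have hs2 : (-1 : ℚ) ^ ((Fin.last ℓ : ℕ) + (jp : ℕ)) = -1 := by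
    rw [Fin.val_last]
    have : (jp : ℕ) = ℓ - 1 := rfl
    rw [this]
    exact Odd.neg_one_pow ⟨ℓ - 1, by omega⟩
  rw [hs1, hs2]
  ring

def DsetL (L : List ℕ) : Set ℕ :=
  {m | ∃ i, 0 < i ∧ i < L.length ∧ (L.take i).sum = m}

lemma sum_take_strict {L : List ℕ} (hpos : ∀ x ∈ L, 0 < x) :
    ∀ i j, i < j → j ≤ L.length → (L.take i).sum < (L.take j).sum := by
  have hadj : ∀ i, 0 ≤ i → i < L.length → (L.take i).sum < (L.take (i + 1)).sum := by
    intro i _ hi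
    rw [List.sum_take_succ _ _ hi]
    have := hpos _ (List.getElem_mem hi)
    omega
  intro i j hij hj
  have := chain_add (a := 0) (n := L.length) hadj (j - i) i (by omega) (by omega)
  have he : i + (j - i) = j := by omega
  rw [he] at this
  omega

lemma master (ℓ : ℕ) : ∀ L : List ℕ, L.length = ℓ → (∀ x ∈ L, 0 < x) →
    ({w ∈ PermsA L.sum | DesA L.sum w = DsetL L}.ncard : ℚ)
      = (L.sum).factorial * (MD ℓ (fun i => (L.take i).sum)).det := by
  induction ℓ using Nat.strong_induction_on with
  | _ ℓ ih =>
  intro L hlen hpos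
  rcases L.eq_nil_or_concat' with rfl | ⟨K, bb, rfl⟩
  · -- L = []
    subst hlen
    have hset : {w ∈ PermsA ([] : List ℕ).sum | DesA ([] : List ℕ).sum w = DsetL []}
        = {id} := by
      ext w
      simp only [Set.mem_setOf_eq, Set.mem_singleton_iff]
      constructor
      · rintro ⟨⟨-, hfix⟩, -⟩
        funext i
        exact hfix i (by simp [Set.mem_Icc])
      · rintro rfl
        refine ⟨⟨by simpa using Set.bijOn_id _, fun i _ => rfl⟩, ?_⟩
        ext i
        simp [DesA, DsetL]
    rw [hset, Set.ncard_singleton]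
    simp [Matrix.det_fin_zero]
  rcases K.eq_nil_or_concat' with rfl | ⟨J, a, rfl⟩
  · -- L = [bb]
    have hbb : 0 < bb := hpos bb (by simp)
    subst hlen
    simp only [List.nil_append]
    have hset : {w ∈ PermsA ([bb] : List ℕ).sum | DesA ([bb] : List ℕ).sum w = DsetL [bb]}
        = {id} := by
      have hsum : ([bb] : List ℕ).sum = bb := by simp
      ext w
      simp only [Set.mem_setOf_eq, Set.mem_singleton_iff, hsum]
      constructor
      · rintro ⟨hw, hdes⟩
        refine eq_id_of_noDescent hw ?_
        intro i h1 h2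
        have hnot : i ∉ DesA bb w := by
          rw [hdes]
          rintro ⟨j, hj1, hj2, -⟩
          simp at hj2
          omega
        rw [DesA, Set.mem_setOf_eq] at hnot
        push_neg at hnot
        have hge := hnot h1 h2
        have hne : w (i + 1) ≠ w i := fun hc =>
          (by omega : i + 1 ≠ i)
            (hw.1.injOn (Set.mem_Icc.mpr ⟨by omega, by omega⟩)
              (Set.mem_Icc.mpr ⟨by omega, by omega⟩) hc)
        omega
      · rintro rfl
        refine ⟨⟨by simpa using Set.bijOn_id _, fun i _ => rfl⟩, ?_⟩
        ext i
        simp only [DesA, DsetL, Set.mem_setOf_eq, id]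
        constructor
        · rintro ⟨-, -, hc⟩; omega
        · rintro ⟨j, hj1, hj2, -⟩; simp at hj2; omega
    rw [hset, Set.ncard_singleton]
    have hdet : (MD ([bb] : List ℕ).length (fun i => (([bb] : List ℕ).take i).sum)).det
        = 1 / (bb.factorial : ℚ) := by
      rw [show ([bb] : List ℕ).length = 1 from rfl, Matrix.det_fin_one, MD]
      norm_num
    rw [hdet]
    have hs : (([bb] : List ℕ).sum) = bb := by simp
    rw [hs, Nat.cast_one]
    have hfact : (bb.factorial : ℚ) ≠ 0 := Nat.cast_ne_zero.mpr bb.factorial_ne_zero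
    field_simp
  · -- L = J ++ [a] ++ [bb]
    have ha : 0 < a := hpos a (by simp)
    have hbb : 0 < bb := hpos bb (by simp)
    have hl : ℓ = J.length + 2 := by simp at hlen; omega
    subst hl
    set K := J ++ [a] with hK
    set KK := J ++ [a + bb] with hKK
    have hKlen : K.length = J.length + 1 := by simp [hK]
    have hKKlen : KK.length = J.length + 1 := by simp [hKK]
    have hKpos : ∀ x ∈ K, 0 < x := fun x hx => hpos x (List.mem_append_left _ hx)
    have hKKpos : ∀ x ∈ KK, 0 < x := by
      intro x hx
      rw [hKK, List.mem_append] at hx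
      rcases hx with h | h
      · exact hpos x (List.mem_append_left _ (List.mem_append_left _ h))
      · simp at h; omega
    have hsum : (K ++ [bb]).sum = K.sum + bb := by simp
    have hKKsum : KK.sum = K.sum + bb := by rw [hKK, hK]; simp; omega
    have hLlen : (K ++ [bb]).length = J.length + 2 := by simp [hK]
    have htakeK : ∀ i, i ≤ J.length + 1 → ((K ++ [bb]).take i).sum = (K.take i).sum := by
      intro i hi
      rw [List.take_append_of_le_length (by omega)]
    have htakeKfull : K.take (J.length + 1) = K := List.take_of_length_le (by omega)
    have htakeKK : ∀ i, i ≤ J.length → (KK.take i).sum = (K.take i).sum := by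
      intro i hi
      rw [hKK, hK, List.take_append_of_le_length (by simpa using hi),
        List.take_append_of_le_length (by simpa using hi)]
    have hDK_bound : ∀ x ∈ DsetL K, 1 ≤ x ∧ x < K.sum := by
      rintro x ⟨i, hi1, hi2, rfl⟩
      constructor
      · have := sum_take_strict hKpos 0 i hi1 (by omega)
        have h0 : 0 < (K.take i).sum := by simpa using this
        omega
      · have := sum_take_strict hKpos i K.length hi2 le_rfl
        rwa [List.take_length] at this
    have hmnot : K.sum ∉ DsetL K := by
      rintro ⟨i, h1, h2, he⟩
      have := sum_take_strict hKpos i K.length h2 le_rfl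
      rw [List.take_length] at this
      omega
    have hDL : DsetL (K ++ [bb]) = DsetL K ∪ {K.sum} := by
      ext x
      simp only [DsetL, Set.mem_setOf_eq, Set.mem_union, Set.mem_singleton_iff]
      constructor
      · rintro ⟨i, h1, h2, rfl⟩
        rw [hLlen] at h2
        rcases lt_or_ge i (J.length + 1) with hi | hi
        · exact Or.inl ⟨i, h1, by omega, (htakeK i (by omega)).symm⟩
        · have : i = J.length + 1 := by omega
          subst this
          right
          rw [htakeK _ le_rfl, htakeKfull]
      · rintro (⟨i, h1, h2, rfl⟩ | rfl)
        · exact ⟨i, h1, by rw [hLlen]; omega, htakeK i (by omega)⟩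
        · exact ⟨J.length + 1, by omega, by rw [hLlen]; omega,
            by rw [htakeK _ le_rfl, htakeKfull]⟩
    have hDKK : DsetL KK = DsetL K := by
      ext x
      simp only [DsetL, Set.mem_setOf_eq]
      constructor
      · rintro ⟨i, h1, h2, rfl⟩
        rw [hKKlen] at h2
        exact ⟨i, h1, by omega, (htakeKK i (by omega)).symm⟩
      · rintro ⟨i, h1, h2, rfl⟩
        rw [hKlen] at h2
        exact ⟨i, h1, by rw [hKKlen]; omega, htakeKK i (by omega)⟩
    -- the two descent classes
    rw [hsum]
    set A := {w ∈ PermsA (K.sum + bb) | DesA (K.sum + bb) w = DsetL (K ++ [bb])} with hA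
    set B := {w ∈ PermsA (K.sum + bb) | DesA (K.sum + bb) w = DsetL KK} with hB
    have hunion : A ∪ B
        = {w ∈ PermsA (K.sum + bb) | DesA (K.sum + bb) w \ {K.sum} = DsetL K} := by
      ext w
      simp only [hA, hB, Set.mem_union, Set.mem_setOf_eq]
      constructor
      · rintro (⟨hp, hd⟩ | ⟨hp, hd⟩)
        · refine ⟨hp, ?_⟩
          rw [hd, hDL]
          ext x
          simp only [Set.mem_diff, Set.mem_union, Set.mem_singleton_iff]
          constructor
          · rintro ⟨h | h, hne⟩
            · exact h
            · exact absurd h hne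
          · intro h
            exact ⟨Or.inl h, fun hc => hmnot (hc ▸ h)⟩
        · refine ⟨hp, ?_⟩
          rw [hd, hDKK]
          exact Set.diff_singleton_eq_self hmnot
      · rintro ⟨hp, hd⟩
        by_cases hm : K.sum ∈ DesA (K.sum + bb) w
        · left
          refine ⟨hp, ?_⟩
          rw [hDL, ← hd]
          ext x
          simp only [Set.mem_diff, Set.mem_union, Set.mem_singleton_iff]
          by_cases hx : x = K.sum
          · subst hx; tauto
          · tauto
        · right
          refine ⟨hp, ?_⟩
          rw [hDKK, ← hd]
          exact (Set.diff_singleton_eq_self hm).symm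
    have hdisj : Disjoint A B := by
      rw [Set.disjoint_left]
      rintro w ⟨-, hd1⟩ ⟨-, hd2⟩
      rw [hDL] at hd1
      rw [hDKK] at hd2
      have : K.sum ∈ DsetL K := by
        rw [← hd2, hd1]
        exact Or.inr rfl
      exact hmnot this
    have hAfin : A.Finite := (permsA_finite _).subset fun w hw => hw.1
    have hBfin : B.Finite := (permsA_finite _).subset fun w hw => hw.1
    have hcount := countA K.sum bb hbb (DsetL K) hDK_bound
    have hrsum : A.ncard + B.ncard
        = (K.sum + bb).choose bb * {w ∈ PermsA K.sum | DesA K.sum w = DsetL K}.ncard := by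
      rw [← Set.ncard_union_eq hdisj hAfin hBfin, hunion]
      exact hcount
    -- induction hypotheses
    have ihK := ih (J.length + 1) (by omega) K hKlen hKpos
    have ihKK := ih (J.length + 1) (by omega) KK hKKlen hKKpos
    rw [hKKsum] at ihKK
    -- determinant recursion
    have hmono : ∀ i j, i < j → j ≤ (J.length + 1) + 1 →
        ((K ++ [bb]).take i).sum < ((K ++ [bb]).take j).sum := by
      intro i j hij hj
      exact sum_take_strict hpos i j hij (by omega)
    have hσ1 : ((K ++ [bb]).take (J.length + 1)).sum = K.sum := by
      rw [htakeK _ le_rfl, htakeKfull]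
    have hσ2 : ((K ++ [bb]).take (J.length + 2)).sum = K.sum + bb := by
      rw [List.take_of_length_le (by omega), hsum]
    have hM1 : MD (J.length + 1) (fun i => ((K ++ [bb]).take i).sum)
        = MD (J.length + 1) (fun i => (K.take i).sum) := by
      ext i j
      simp only [MD]
      rw [htakeK (i : ℕ) (by omega), htakeK ((j : ℕ) + 1) (by omega)]
    have hM2 : MD (J.length + 1)
          (fun j => if j < J.length + 1 then ((K ++ [bb]).take j).sum
            else ((K ++ [bb]).take (J.length + 2)).sum)
        = MD (J.length + 1) (fun i => (KK.take i).sum) := by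
      ext i j
      simp only [MD]
      have hrow : (if (i : ℕ) < J.length + 1 then ((K ++ [bb]).take (i : ℕ)).sum
          else ((K ++ [bb]).take (J.length + 2)).sum) = (KK.take (i : ℕ)).sum := by
        rw [if_pos i.2, htakeK (i : ℕ) (by omega), htakeKK (i : ℕ) (by have := i.2; omega)]
      have hcol : (if (j : ℕ) + 1 < J.length + 1 then ((K ++ [bb]).take ((j : ℕ) + 1)).sum
          else ((K ++ [bb]).take (J.length + 2)).sum) = (KK.take ((j : ℕ) + 1)).sum := by
        rcases lt_or_ge ((j : ℕ) + 1) (J.length + 1) with hj | hj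
        · rw [if_pos hj, htakeK _ (by omega), htakeKK _ (by omega)]
        · have hje : (j : ℕ) + 1 = J.length + 1 := by have := j.2; omega
          rw [if_neg (by omega), hσ2, hje, List.take_of_length_le (by omega), hKKsum]
      rw [hrow, hcol]
    have hrec : (MD (J.length + 2) (fun i => ((K ++ [bb]).take i).sum)).det
        = (1 : ℚ) / (bb.factorial) * (MD (J.length + 1) (fun i => (K.take i).sum)).det
          - (MD (J.length + 1) (fun i => (KK.take i).sum)).det := by
      have h0 := MD_det_rec (J.length + 1) (by omega) (fun i => ((K ++ [bb]).take i).sum) hmono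
      rw [show J.length + 1 + 1 = J.length + 2 from rfl] at h0
      rw [h0, hM1, hM2]
      simp only [hσ1, hσ2, Nat.add_sub_cancel_left]
    rw [hrec]
    -- final algebra
    have hq : (A.ncard : ℚ) = ((K.sum + bb).choose bb : ℚ)
        * ({w ∈ PermsA K.sum | DesA K.sum w = DsetL K}.ncard : ℚ) - (B.ncard : ℚ) := by
      have hcast : (A.ncard : ℚ) + (B.ncard : ℚ)
          = ((K.sum + bb).choose bb : ℚ)
            * ({w ∈ PermsA K.sum | DesA K.sum w = DsetL K}.ncard : ℚ) := by
        exact_mod_cast hrsum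
      linarith
    rw [hq, ihK, ihKK]
    have hfc : (((K.sum + bb).choose bb : ℚ)) * (bb.factorial : ℚ) * ((K.sum).factorial : ℚ)
        = ((K.sum + bb).factorial : ℚ) := by
      have := Nat.choose_mul_factorial_mul_factorial (show bb ≤ K.sum + bb by omega)
      have h2 : K.sum + bb - bb = K.sum := by omega
      rw [h2] at this
      exact_mod_cast this
    have hbbne : (bb.factorial : ℚ) ≠ 0 := Nat.cast_ne_zero.mpr bb.factorial_ne_zero
    field_simp
    linear_combination (MD (J.length + 1) fun i => (List.take i K).sum).det * hfc

/-- The determinantal formula for the ribbon number: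
r_α = n! · det( 1/(σ_j - σ_{i-1})! ), where 1/k! is interpreted as 0 when k < 0. -/
theorem ribbonA_eq_det {n : ℕ} (α : Composition n) :
    (ribbonA α : ℚ) =
      (n.factorial : ℚ) *
        Matrix.det (fun i j : Fin α.length =>
          if α.sizeUpTo (i : ℕ) ≤ α.sizeUpTo ((j : ℕ) + 1) then
            (1 : ℚ) / (α.sizeUpTo ((j : ℕ) + 1) - α.sizeUpTo (i : ℕ)).factorial
          else 0) := by
  have h := master α.length α.blocks α.blocks_length (fun x hx => α.blocks_pos hx)
  rw [α.blocks_sum] at h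
  exact h
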